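/- arXiv:2402.03101 — 2 statements merged into one kernel-verified Lean document; each statement's English description precedes it below -/
import Mathlib

section
/- Let α ∈ (0,1] and let a be a populated pre-multi-index. Then the scaling of a satisfies |a| ≥ −2 + α, with equality if and only if a = 1^𝔥_0 (the pre-multi-index whose only nonzero entry is a single 1 in the 𝔥-component at index 0). -/
/-- The seven labels 𝔅 = {𝔟,𝔠,𝔡,𝔢,𝔣,𝔤,𝔥}. -/
inductive Lbl : Type
  | b | c | d | e | f | g | h
  deriving DecidableEq

instance instFintypeLbl : Fintype Lbl :=
  ⟨{Lbl.b, Lbl.c, Lbl.d, Lbl.e, Lbl.f, Lbl.g, Lbl.h}, fun x => by cases x <;> simp⟩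

/-- Size 𝔰(q) = Σᵢ qᵢ of a finitely supported sequence. -/
def seqSize (q : ℕ →₀ ℕ) : ℕ := q.sum fun _ n => n

/-- Order 𝔬(q) = Σᵢ i·qᵢ of a finitely supported sequence. -/
def seqOrder (q : ℕ →₀ ℕ) : ℕ := q.sum fun i n => i * n

/-- Length 𝔩(q) = max of the support of q (0 if q = 0). -/
def seqLen (q : ℕ →₀ ℕ) : ℕ := q.support.sup id

/-- A pre-multi-index: a family of seven finitely supported sequences. -/
abbrev PMI : Type := Lbl → (ℕ →₀ ℕ)

/-- Size of a pre-multi-index. -/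
def pmiSize (a : PMI) : ℕ := ∑ k : Lbl, seqSize (a k)

/-- Order of a pre-multi-index. -/
def pmiOrder (a : PMI) : ℕ :=
  (∑ k : Lbl, seqOrder (a k)) + seqSize (a Lbl.d) + seqSize (a Lbl.f)
    + 2 * seqSize (a Lbl.g)

/-- Length of a pre-multi-index. -/
def pmiLen (a : PMI) : ℕ := Finset.univ.sup fun k : Lbl => seqLen (a k)

/-- A pre-multi-index is populated if 𝔰(a) = 𝔬(a) + 1. -/
def Populated (a : PMI) : Prop := pmiSize a = pmiOrder a + 1

/-- The scaling |a| of a pre-multi-index, for a real parameter α. -/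
noncomputable def scaling (α : ℝ) (a : PMI) : ℝ :=
  -(2 - α) * (pmiSize a : ℝ) + 2 * (pmiOrder a : ℝ)
    + (2 - α) * ((seqSize (a Lbl.b) : ℝ) + (seqSize (a Lbl.c) : ℝ) + (seqSize (a Lbl.e) : ℝ))
    + (1 - α) * ((seqSize (a Lbl.d) : ℝ) + (seqSize (a Lbl.f) : ℝ))
    - α * (seqSize (a Lbl.g) : ℝ)

/-- 1^𝔨_k : the pre-multi-index whose only nonzero entry is a single 1 in the
𝔨-component at index k. -/
noncomputable def onePMI (k : Lbl) (n : ℕ) : PMI :=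
  fun k' => if k' = k then Finsupp.single n 1 else 0

/-- A derivator (𝔨₀,𝔨₁,k₀,k₁). -/
def IsDerivator (l₀ l₁ : Lbl) (k₀ k₁ : ℕ) : Prop :=
  (l₀ = l₁ ∧ k₁ = k₀ + 1) ∨
    (((l₀ = Lbl.c ∧ l₁ = Lbl.d) ∨ (l₀ = Lbl.e ∧ l₁ = Lbl.f) ∨ (l₀ = Lbl.f ∧ l₁ = Lbl.g))
      ∧ k₁ = k₀)

/-! Substituting 𝔰(a) = 𝔬(a) + 1 into the scaling leaves
`-2 + α + α Σ_𝔨 𝔬(a^𝔨) + α 𝔰(a^𝔤) + 𝔰(a^𝔡) + 𝔰(a^𝔣) + (2 - α)(𝔰(a^𝔟) + 𝔰(a^𝔠) + 𝔰(a^𝔢))`,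
whose last four terms are nonnegative for `α ∈ (0, 1]`. In the case of equality they all
vanish, so `a` lives in the 𝔥-component with order 0, and populatedness forces its size
there to be 1, i.e. `a = 1^𝔥_0`. -/

lemma Lbl.sum_univ {M : Type*} [AddCommMonoid M] (f : Lbl → M) :
    ∑ k, f k = f .b + f .c + f .d + f .e + f .f + f .g + f .h := by
  rw [show (Finset.univ : Finset Lbl) = {.b, .c, .d, .e, .f, .g, .h} from rfl]
  simp [add_assoc]

lemma seqSize_eq_zero_iff {q : ℕ →₀ ℕ} : seqSize q = 0 ↔ q = 0 := by
  simp [seqSize, Finsupp.sum, Finset.sum_eq_zero_iff, Finsupp.ext_iff]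

lemma eq_single_zero_of_seqOrder_eq_zero {q : ℕ →₀ ℕ} (hq : seqOrder q = 0) :
    q = Finsupp.single 0 (seqSize q) := by
  have hsupp : q.support ⊆ {0} := fun i hi => by
    have := Finset.sum_eq_zero_iff.mp hq i hi
    simp_all
  rw [seqSize, Finsupp.sum_of_support_subset q hsupp _ (fun _ _ => rfl), Finset.sum_singleton]
  exact Finsupp.eq_single_iff.mpr ⟨hsupp, rfl⟩

lemma Populated.scaling_eq {a : PMI} (ha : Populated a) (α : ℝ) :
    scaling α a = -2 + α + (α * (∑ k, seqOrder (a k) : ℕ) + α * seqSize (a .g)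
      + (seqSize (a .d) + seqSize (a .f))
      + (2 - α) * (seqSize (a .b) + seqSize (a .c) + seqSize (a .e))) := by
  have hpop : (pmiSize a : ℝ) = pmiOrder a + 1 := by exact_mod_cast ha
  rw [pmiSize, Lbl.sum_univ, pmiOrder] at hpop
  rw [scaling, pmiSize, Lbl.sum_univ, pmiOrder]
  push_cast at hpop ⊢
  linear_combination (α - 2) * hpop

lemma Populated.eq_onePMI_h_zero {a : PMI} (ha : Populated a) (horder : ∀ k, seqOrder (a k) = 0)
    (hsize : ∀ k ≠ .h, seqSize (a k) = 0) : a = onePMI .h 0 := by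
  have hh : seqSize (a .h) = 1 := by
    have := ha
    simp (disch := decide) only [Populated, pmiSize, pmiOrder, Lbl.sum_univ, horder, hsize] at this
    omega
  funext k
  by_cases hk : k = .h
  · subst hk
    simpa [onePMI, hh] using eq_single_zero_of_seqOrder_eq_zero (horder .h)
  · simpa [onePMI, hk] using seqSize_eq_zero_iff.mp (hsize k hk)

lemma scaling_onePMI_h_zero (α : ℝ) : scaling α (onePMI .h 0) = -2 + α := by
  simp [scaling, pmiSize, pmiOrder, Lbl.sum_univ, onePMI, seqSize, seqOrder]
  ring

theorem stmt7 (α : ℝ) (hα : α ∈ Set.Ioc (0:ℝ) 1) (a : PMI) (ha : Populated a) :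
    -2 + α ≤ scaling α a ∧ (scaling α a = -2 + α ↔ a = onePMI Lbl.h 0) := by
  obtain ⟨hα0, hα1⟩ := hα
  have hexcess := ha.scaling_eq α
  have horder : 0 ≤ α * (∑ k, seqOrder (a k) : ℕ) := by positivity
  have hg : 0 ≤ α * seqSize (a .g) := by positivity
  have hdf : 0 ≤ (seqSize (a .d) + seqSize (a .f) : ℝ) := by positivity
  have hbce : 0 ≤ (2 - α) * (seqSize (a .b) + seqSize (a .c) + seqSize (a .e)) :=
    mul_nonneg (by linarith) (by positivity)
  refine ⟨by linarith, fun heq => ?_, fun h => h ▸ scaling_onePMI_h_zero α⟩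
  have hzero : α * (∑ k, seqOrder (a k) : ℕ) = 0 ∧ α * seqSize (a .g) = 0 ∧
      (seqSize (a .d) + seqSize (a .f) : ℝ) = 0 ∧
      (2 - α) * (seqSize (a .b) + seqSize (a .c) + seqSize (a .e)) = 0 := by
    refine ⟨?_, ?_, ?_, ?_⟩ <;> linarith
  simp only [mul_eq_zero, hα0.ne', show (2 : ℝ) - α ≠ 0 by linarith, false_or] at hzero
  norm_cast at hzero
  simp only [Finset.sum_eq_zero_iff, Finset.mem_univ, true_implies, Nat.add_eq_zero_iff] at hzero
  obtain ⟨hord, hsg, ⟨hsd, hsf⟩, ⟨hsb, hsc⟩, hse⟩ := hzero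
  refine ha.eq_onePMI_h_zero hord fun k hk => ?_
  cases k <;> simp_all
end

section
/- Let α ∈ (0,1], let Γ = ⌊4/α⌋ and δ = −2 + α + (α/2)(Γ+1), and let κ be a real number with 0 < κ ≤ α/2 and κ ≤ δ/(2Γ+2). If a is a populated pre-multi-index with 𝔬(a) ≥ Γ + 1, then |a| − 1 + (α−1−κ)·(𝔰(a^𝔠) + 2𝔰(a^𝔢) + 𝔰(a^𝔣)) ≥ −1 + α. -/
instance : Fintype Lbl :=
  ⟨{Lbl.b, Lbl.c, Lbl.d, Lbl.e, Lbl.f, Lbl.g, Lbl.h}, fun x => by cases x <;> simp⟩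

lemma sizes_dfg_le_pmiOrder (a : PMI) :
    seqSize (a Lbl.d) + seqSize (a Lbl.f) + 2 * seqSize (a Lbl.g) ≤ pmiOrder a := by
  unfold pmiOrder
  omega

lemma Populated.scaling_eq_s10 {a : PMI} (ha : Populated a) (α : ℝ) :
    scaling α a = α * pmiOrder a - 2 + α
      + (2 - α) * ((seqSize (a Lbl.b) : ℝ) + seqSize (a Lbl.c) + seqSize (a Lbl.e))
      + (1 - α) * ((seqSize (a Lbl.d) : ℝ) + seqSize (a Lbl.f))
      - α * seqSize (a Lbl.g) := by
  rw [scaling, ha]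
  push_cast
  ring

lemma lt_mul_of_floor_div_add_one_le {α : ℝ} (hα : 0 < α) (c : ℝ) {n : ℕ}
    (hn : ⌊c / α⌋₊ + 1 ≤ n) : c < α * n := by
  have hcn : c / α < n :=
    (Nat.lt_floor_add_one _).trans_le (by exact_mod_cast hn)
  rwa [div_lt_iff₀ hα, mul_comm] at hcn

/- Half of `α 𝔬(a)` pays for the negative contributions of `𝔤` and of `κ 𝔰(a^𝔣)`,
since `𝔰(a^𝔣) + 2 𝔰(a^𝔤) ≤ 𝔬(a)`; every other term is nonnegative once `κ ≤ α/2 ≤ 1/2`. -/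
lemma Populated.weighted_scaling_ge {a : PMI} (ha : Populated a) {α κ : ℝ}
    (hα0 : 0 ≤ α) (hα1 : α ≤ 1) (hκ : κ ≤ α / 2) :
    -1 + α + (α / 2 * pmiOrder a - 2) ≤
      scaling α a - 1
        + (α - 1 - κ) * ((seqSize (a Lbl.c) : ℝ) + 2 * seqSize (a Lbl.e) + seqSize (a Lbl.f)) := by
  have hdfg : (seqSize (a Lbl.d) : ℝ) + seqSize (a Lbl.f) + 2 * seqSize (a Lbl.g)
      ≤ pmiOrder a := by exact_mod_cast sizes_dfg_le_pmiOrder a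
  have hb : 0 ≤ (2 - α) * (seqSize (a Lbl.b) : ℝ) := mul_nonneg (by linarith) (Nat.cast_nonneg _)
  have hc : 0 ≤ (1 - κ) * (seqSize (a Lbl.c) : ℝ) := mul_nonneg (by linarith) (Nat.cast_nonneg _)
  have hd : 0 ≤ (1 - α) * (seqSize (a Lbl.d) : ℝ) := mul_nonneg (by linarith) (Nat.cast_nonneg _)
  have he : 0 ≤ (α - 2 * κ) * (seqSize (a Lbl.e) : ℝ) :=
    mul_nonneg (by linarith) (Nat.cast_nonneg _)
  have hf : 0 ≤ (α / 2 - κ) * (seqSize (a Lbl.f) : ℝ) :=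
    mul_nonneg (by linarith) (Nat.cast_nonneg _)
  have hhalf : 0 ≤ α / 2 * ((pmiOrder a : ℝ) - seqSize (a Lbl.d) - seqSize (a Lbl.f)
      - 2 * seqSize (a Lbl.g)) := mul_nonneg (by linarith) (by linarith)
  rw [ha.scaling_eq_s10]
  linarith

theorem stmt10_general (α : ℝ) (hα : α ∈ Set.Ioc (0:ℝ) 1) (κ : ℝ)
    (hκ1 : κ ≤ α / 2)
    (a : PMI) (ha : Populated a) (hord : ⌊4 / α⌋₊ + 1 ≤ pmiOrder a) :
    -1 + α ≤
      scaling α a - 1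
        + (α - 1 - κ) * ((seqSize (a Lbl.c) : ℝ) + 2 * (seqSize (a Lbl.e) : ℝ)
            + (seqSize (a Lbl.f) : ℝ)) := by
  have h4 : 4 < α * pmiOrder a := lt_mul_of_floor_div_add_one_le hα.1 4 hord
  have := ha.weighted_scaling_ge hα.1.le hα.2 hκ1
  linarith

theorem stmt10 (α : ℝ) (hα : α ∈ Set.Ioc (0:ℝ) 1) (κ : ℝ)
    (hκpos : 0 < κ) (hκ1 : κ ≤ α / 2)
    (hκ2 : κ ≤ (-2 + α + (α / 2) * ((⌊4 / α⌋₊ : ℝ) + 1)) / (2 * (⌊4 / α⌋₊ : ℝ) + 2))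
    (a : PMI) (ha : Populated a) (hord : ⌊4 / α⌋₊ + 1 ≤ pmiOrder a) :
    -1 + α ≤
      scaling α a - 1
        + (α - 1 - κ) * ((seqSize (a Lbl.c) : ℝ) + 2 * (seqSize (a Lbl.e) : ℝ)
            + (seqSize (a Lbl.f) : ℝ)) :=
  stmt10_general α hα κ hκ1 a ha hord
end
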